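/- Let ν be a unit vector in ℝ³ and Re, Rm ∈ ℝ³ satisfy the impedance relation ν × (Rm × ν) + λ (ν × Re) = -(ν × (Vm × ν)) - λ (ν × Ve) for some λ > 0 and Ve, Vm ∈ ℝ³. Then ν · (Re × Rm) = -λ |ν × Re + (1/2)(ν × Ve + (1/λ) ν × (Vm × ν))|² + (λ/4)|ν × Ve + (1/λ) ν × (Vm × ν)|². -/

import Mathlib

open scoped RealInnerProductSpace

noncomputable def cross3 (a b : EuclideanSpace ℝ (Fin 3)) : EuclideanSpace ℝ (Fin 3) :=
  (WithLp.equiv 2 (Fin 3 → ℝ)).symm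
    ![a 1 * b 2 - a 2 * b 1, a 2 * b 0 - a 0 * b 2, a 0 * b 1 - a 1 * b 0]

/-!
Write `a = ν × Re`. Since `a ⊥ ν`, the triple product `ν · (Re × Rm) = a · Rm` only sees the
tangential part `ν × (Rm × ν)` of `Rm`, which the impedance relation expresses as `-λ (a + b)`.
Hence `ν · (Re × Rm) = -λ (|a|² + a · b)`, and completing the square gives the identity.
-/

open Matrix WithLp

lemma cross3_eq_toLp_crossProduct (a b : EuclideanSpace ℝ (Fin 3)) :
    cross3 a b = toLp 2 (ofLp a ⨯₃ ofLp b) := by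
  rw [cross3, cross_apply]
  rfl

lemma inner_cross3_right (a b c : EuclideanSpace ℝ (Fin 3)) :
    ⟪a, cross3 b c⟫ = ⟪cross3 a b, c⟫ := by
  simp only [cross3_eq_toLp_crossProduct, EuclideanSpace.inner_eq_star_dotProduct, star_trivial]
  rw [dotProduct_comm _ (ofLp a), triple_product_permutation (ofLp c)]

lemma inner_cross3_self_left (a b : EuclideanSpace ℝ (Fin 3)) : ⟪cross3 a b, a⟫ = 0 := by
  simp only [cross3_eq_toLp_crossProduct, EuclideanSpace.inner_eq_star_dotProduct, star_trivial,
    dot_self_cross]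

lemma cross3_cross3 (a b c : EuclideanSpace ℝ (Fin 3)) :
    cross3 a (cross3 b c) = ⟪a, c⟫ • b - ⟪a, b⟫ • c := by
  simp only [cross3_eq_toLp_crossProduct, EuclideanSpace.inner_eq_star_dotProduct, star_trivial,
    cross_cross_eq_smul_sub_smul', toLp_sub, toLp_smul, toLp_ofLp,
    dotProduct_comm (ofLp a) (ofLp c)]

lemma cross3_cross3_self_of_norm_eq_one {ν : EuclideanSpace ℝ (Fin 3)} (hν : ‖ν‖ = 1)
    (v : EuclideanSpace ℝ (Fin 3)) : cross3 ν (cross3 v ν) = v - ⟪ν, v⟫ • ν := by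
  rw [cross3_cross3, real_inner_self_eq_norm_sq, hν, one_pow, one_smul]

lemma norm_add_half_smul_sq {F : Type*} [NormedAddCommGroup F] [InnerProductSpace ℝ F] (x y : F) :
    ‖x + (1 / 2 : ℝ) • y‖ ^ 2 = ‖x‖ ^ 2 + ⟪x, y⟫ + ‖y‖ ^ 2 / 4 := by
  rw [norm_add_sq_real, inner_smul_right, norm_smul]
  norm_num
  ring

theorem stmt_8 (ν Re Rm Ve Vm : EuclideanSpace ℝ (Fin 3)) (hν : ‖ν‖ = 1)
    (l : ℝ) (hl : 0 < l)
    (himp : cross3 ν (cross3 Rm ν) + l • cross3 ν Re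
      = -(cross3 ν (cross3 Vm ν)) - l • cross3 ν Ve) :
    ⟪ν, cross3 Re Rm⟫
      = -l * ‖cross3 ν Re
            + (1 / 2 : ℝ) • (cross3 ν Ve + (1 / l) • cross3 ν (cross3 Vm ν))‖ ^ 2
        + (l / 4) * ‖cross3 ν Ve + (1 / l) • cross3 ν (cross3 Vm ν)‖ ^ 2 := by
  set a := cross3 ν Re
  set b := cross3 ν Ve + (1 / l) • cross3 ν (cross3 Vm ν)
  have hlb : l • b = l • cross3 ν Ve + cross3 ν (cross3 Vm ν) := by
    rw [smul_add, smul_smul, mul_one_div_cancel hl.ne', one_smul]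
  have hRm : cross3 ν (cross3 Rm ν) = -l • (a + b) := by
    rw [neg_smul, smul_add, hlb, eq_sub_of_add_eq himp]
    abel
  calc ⟪ν, cross3 Re Rm⟫ = ⟪a, Rm⟫ := inner_cross3_right ν Re Rm
    _ = ⟪a, cross3 ν (cross3 Rm ν)⟫ := by
      rw [cross3_cross3_self_of_norm_eq_one hν, inner_sub_right, inner_smul_right,
        real_inner_comm, inner_cross3_self_left, mul_zero, sub_zero]
    _ = -l * (‖a‖ ^ 2 + ⟪a, b⟫) := by
      rw [hRm, inner_smul_right, inner_add_right, real_inner_self_eq_norm_sq]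
    _ = _ := by
      rw [norm_add_half_smul_sq]
      ring
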